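/- Lemma 2(2): For any bipartite pure state |φ⟩ with Schmidt decomposition |φ⟩ = Σ_{i=0}^{d-1} √μᵢ |i_A i_B⟩, d = min(d_A, d_B), one has ‖M_{α,β}^l(|φ⟩⟨φ|)‖_tr ≤ √((lα²+1)(lβ²+1)) + (d−1). -/

import Mathlib

open Matrix
open scoped Kronecker ComplexOrder

/-- Column-stacking vectorization: `vec A (j, i) = A i j`. -/
def vec {m n : Type*} (A : Matrix m n ℂ) : n × m → ℂ := fun p => A p.2 p.1

/-- The realignment map across the bipartition `A | B`. -/
def realign {A B : Type*} (ρ : Matrix (A × B) (A × B) ℂ) :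
    Matrix (A × A) (B × B) ℂ :=
  Matrix.of fun r c => ρ (r.2, c.2) (r.1, c.1)

/-- Partial trace over the first tensor factor. -/
noncomputable def ptrA {A B : Type*} [Fintype A] (ρ : Matrix (A × B) (A × B) ℂ) :
    Matrix B B ℂ :=
  Matrix.of fun i j => ∑ k, ρ (k, i) (k, j)

/-- Partial trace over the second tensor factor. -/
noncomputable def ptrB {A B : Type*} [Fintype B] (ρ : Matrix (A × B) (A × B) ℂ) :
    Matrix A A ℂ :=
  Matrix.of fun i j => ∑ k, ρ (i, k) (j, k)

/-- The positive semidefinite square root of a positive semidefinite matrix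
(`Matrix.PosSemidef.sqrt` of the older Mathlib, removed since). -/
noncomputable def posSemidefSqrt {n : Type*} [Fintype n] [DecidableEq n] {A : Matrix n n ℂ}
    (hA : A.PosSemidef) : Matrix n n ℂ :=
  hA.1.eigenvectorUnitary.1 * diagonal ((↑) ∘ (√·) ∘ hA.1.eigenvalues) *
  (star hA.1.eigenvectorUnitary : Matrix n n ℂ)

/-- The trace norm `‖A‖_tr = tr √(Aᴴ A)`, i.e. the sum of singular values. -/
noncomputable def traceNorm {m n : Type*} [Fintype m] [Fintype n] [DecidableEq n]
    (A : Matrix m n ℂ) : ℝ :=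
  ((posSemidefSqrt (Matrix.posSemidef_conjTranspose_mul_self A)).trace).re

/-- The matrix `M_{α,β}^l(ρ) = [[αβ E_{l×l}, α ω_l(tr_A ρ)ᵀ],
[β ω_l(tr_B ρ), R(ρ)]]`. -/
noncomputable def Mblock (α β : ℝ) (l : ℕ) {A B : Type*} [Fintype A] [Fintype B]
    (ρ : Matrix (A × B) (A × B) ℂ) :
    Matrix (Fin l ⊕ A × A) (Fin l ⊕ B × B) ℂ :=
  Matrix.fromBlocks
    (Matrix.of fun _ _ => ((α * β : ℝ) : ℂ))
    (Matrix.of fun _ c => (α : ℂ) * _root_.vec (ptrA ρ) c)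
    (Matrix.of fun r _ => (β : ℂ) * _root_.vec (ptrB ρ) r)
    (realign ρ)

/-! Expanding `|φ⟩⟨φ| = ∑_{m,n} √(μₘμₙ) (uₘuₙ*) ⊗ (vₘvₙ*)` writes `M` as
`∑_{m,n} √(μₘμₙ) xₘₙ yₘₙᵀ` with `xₘₙ = (αδₘₙ, …, αδₘₙ, vec (uₘuₙ*))` and
`yₘₙ = (βδₘₙ, …, βδₘₙ, vec (vₘvₙ*))`, vectors of norm `√(lα² + 1)` resp. `√(lβ² + 1)` on the
diagonal and `1` off it. Pairing `M` with its singular vectors and applying Cauchy–Schwarz and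
Bessel's inequality bounds the trace norm of a sum of rank-one matrices `∑ cᵢ xᵢ yᵢᵀ` by
`∑ |cᵢ| ‖xᵢ‖ ‖yᵢ‖`. This gives `√((lα²+1)(lβ²+1)) ∑ μₘ + ∑_{m≠n} √(μₘμₙ)`, and
`(∑ √μₘ)² ≤ d` by Cauchy–Schwarz. -/

open scoped InnerProductSpace ComplexConjugate

section InnerProductSpace

variable {𝕜 E F ι : Type*} [RCLike 𝕜] [NormedAddCommGroup E] [InnerProductSpace 𝕜 E]
  [NormedAddCommGroup F] [InnerProductSpace 𝕜 F] [Fintype ι]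

lemma sum_norm_inner_mul_norm_inner_le {z : ι → E} {w : ι → F}
    (hz : ∀ x, ∑ i, ‖⟪z i, x⟫_𝕜‖ ^ 2 ≤ ‖x‖ ^ 2) (hw : ∀ y, ∑ i, ‖⟪w i, y⟫_𝕜‖ ^ 2 ≤ ‖y‖ ^ 2)
    (x : E) (y : F) : ∑ i, ‖⟪z i, x⟫_𝕜‖ * ‖⟪w i, y⟫_𝕜‖ ≤ ‖x‖ * ‖y‖ := by
  calc ∑ i, ‖⟪z i, x⟫_𝕜‖ * ‖⟪w i, y⟫_𝕜‖
      ≤ √(∑ i, ‖⟪z i, x⟫_𝕜‖ ^ 2) * √(∑ i, ‖⟪w i, y⟫_𝕜‖ ^ 2) :=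
        Real.sum_mul_le_sqrt_mul_sqrt _ _ _
    _ ≤ √(‖x‖ ^ 2) * √(‖y‖ ^ 2) := by gcongr; exacts [hz x, hw y]
    _ = ‖x‖ * ‖y‖ := by simp

end InnerProductSpace

lemma EuclideanSpace.norm_toLp_star {n : Type*} [Fintype n] (y : EuclideanSpace ℂ n) :
    ‖WithLp.toLp 2 (star ⇑y)‖ = ‖y‖ := by
  simp [EuclideanSpace.norm_eq]

section TraceNorm

variable {m n : Type*} [Fintype m] [Fintype n]

lemma inner_sum_smul_vecMulVec_mulVec {ι : Type*} [Fintype ι] (c : ι → ℂ)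
    (x : ι → EuclideanSpace ℂ m) (y : ι → EuclideanSpace ℂ n) (z : EuclideanSpace ℂ m)
    (w : EuclideanSpace ℂ n) :
    ⟪z, WithLp.toLp 2 ((∑ i, c i • vecMulVec (x i) (y i)) *ᵥ w)⟫_ℂ =
      ∑ i, c i * ⟪z, x i⟫_ℂ * ⟪WithLp.toLp 2 (star ⇑(y i)), w⟫_ℂ := by
  simp only [sum_mulVec, smul_mulVec, vecMulVec_mulVec, op_smul_eq_smul, WithLp.toLp_sum,
    WithLp.toLp_smul, inner_sum, inner_smul_right, EuclideanSpace.inner_eq_star_dotProduct,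
    star_star]
  refine Finset.sum_congr rfl fun i _ => ?_
  rw [dotProduct_comm (WithLp.ofLp w)]
  ring

variable [DecidableEq n]

lemma traceNorm_eq_sum_sqrt_eigenvalues (A : Matrix m n ℂ) :
    traceNorm A = ∑ j, √((posSemidef_conjTranspose_mul_self A).1.eigenvalues j) := by
  rw [traceNorm, posSemidefSqrt, trace_mul_cycle,
    (posSemidef_conjTranspose_mul_self A).1.eigenvectorUnitary.2.1, one_mul, trace_diagonal]
  simp

lemma inner_mulVec_eigenvectorBasis (A : Matrix m n ℂ) (j k : n) :
    ⟪WithLp.toLp 2 (A *ᵥ (posSemidef_conjTranspose_mul_self A).1.eigenvectorBasis j),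
      WithLp.toLp 2 (A *ᵥ (posSemidef_conjTranspose_mul_self A).1.eigenvectorBasis k)⟫_ℂ =
      if j = k then ((posSemidef_conjTranspose_mul_self A).1.eigenvalues k : ℂ) else 0 := by
  set hH := (posSemidef_conjTranspose_mul_self A).1
  have hw := orthonormal_iff_ite.mp hH.eigenvectorBasis.orthonormal j k
  rw [EuclideanSpace.inner_eq_star_dotProduct] at hw
  rw [EuclideanSpace.inner_toLp_toLp, dotProduct_comm, star_mulVec, ← dotProduct_mulVec,
    mulVec_mulVec, hH.mulVec_eigenvectorBasis, dotProduct_smul, dotProduct_comm, hw]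
  simp [Complex.real_smul]

lemma exists_traceNorm_eq_sum_inner (A : Matrix m n ℂ) :
    ∃ (z : n → EuclideanSpace ℂ m) (w : n → EuclideanSpace ℂ n),
      (∀ x, ∑ j, ‖⟪z j, x⟫_ℂ‖ ^ 2 ≤ ‖x‖ ^ 2) ∧ Orthonormal ℂ w ∧
      traceNorm A = ∑ j, (⟪z j, WithLp.toLp 2 (A *ᵥ w j)⟫_ℂ).re := by
  set hA := posSemidef_conjTranspose_mul_self A
  set lam := hA.1.eigenvalues
  set w := fun j => hA.1.eigenvectorBasis j
  set f := fun j => WithLp.toLp 2 (A *ᵥ w j)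
  have hf : ∀ j k, ⟪f j, f k⟫_ℂ = if j = k then (lam k : ℂ) else 0 :=
    inner_mulVec_eigenvectorBasis A
  -- the `A wⱼ` are orthogonal of norm `√λⱼ`; normalizing them sends those with `λⱼ = 0` to `0`
  set z := fun j => ((√(lam j) : ℂ))⁻¹ • f j
  have hz : ∀ j k, ⟪z j, z k⟫_ℂ = if j = k then ((√(lam j))⁻¹ ^ 2 * lam j : ℝ) else 0 := by
    intro j k
    simp only [z, inner_smul_left, inner_smul_right, hf]
    split_ifs with h
    · subst h; push_cast; simp only [map_inv₀, Complex.conj_ofReal, inv_pow]; ring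
    · simp
  refine ⟨z, w, fun x => ?_, hA.1.eigenvectorBasis.orthonormal, ?_⟩
  · have hon : Orthonormal ℂ (fun j : {j // lam j ≠ 0} => z j) := by
      rw [orthonormal_iff_ite]
      rintro ⟨j, hj⟩ ⟨k, hk⟩
      rw [hz, inv_pow, Real.sq_sqrt (hA.eigenvalues_nonneg j), inv_mul_cancel₀ hj]
      split_ifs <;> simp_all [Subtype.ext_iff]
    have hbessel := hon.sum_inner_products_le x (s := Finset.univ.subtype fun j => lam j ≠ 0)
    rw [Finset.sum_subtype_eq_sum_filter (fun j => ‖⟪z j, x⟫_ℂ‖ ^ 2),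
      Finset.sum_filter_of_ne] at hbessel
    · exact hbessel
    · intro j _ hzx hj
      simp [z, hj] at hzx
  · rw [traceNorm_eq_sum_sqrt_eigenvalues]
    refine Finset.sum_congr rfl fun j _ => ?_
    rw [inner_smul_left, hf, if_pos rfl, ← Complex.ofReal_inv, Complex.conj_ofReal,
      ← Complex.ofReal_mul, Complex.ofReal_re, inv_mul_eq_div, Real.div_sqrt]

theorem traceNorm_sum_smul_vecMulVec_le {ι : Type*} [Fintype ι] (c : ι → ℂ)
    (x : ι → EuclideanSpace ℂ m) (y : ι → EuclideanSpace ℂ n) :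
    traceNorm (∑ i, c i • vecMulVec (x i) (y i)) ≤ ∑ i, ‖c i‖ * (‖x i‖ * ‖y i‖) := by
  obtain ⟨z, w, hz, hw, htr⟩ := exists_traceNorm_eq_sum_inner (∑ i, c i • vecMulVec (x i) (y i))
  have hw' : ∀ y, ∑ j, ‖⟪w j, y⟫_ℂ‖ ^ 2 ≤ ‖y‖ ^ 2 := fun y => hw.sum_inner_products_le y
  set y' := fun i => WithLp.toLp 2 (star ⇑(y i))
  calc _ = ∑ j, (∑ i, c i * ⟪z j, x i⟫_ℂ * ⟪y' i, w j⟫_ℂ).re := by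
        simp only [htr, inner_sum_smul_vecMulVec_mulVec, y']
    _ ≤ ∑ j, ∑ i, ‖c i‖ * (‖⟪z j, x i⟫_ℂ‖ * ‖⟪w j, y' i⟫_ℂ‖) := by
        refine Finset.sum_le_sum fun j _ => (Complex.re_le_norm _).trans ?_
        refine (norm_sum_le _ _).trans_eq (Finset.sum_congr rfl fun i _ => ?_)
        rw [norm_mul, norm_mul, norm_inner_symm (y' i), mul_assoc]
    _ = ∑ i, ‖c i‖ * ∑ j, ‖⟪z j, x i⟫_ℂ‖ * ‖⟪w j, y' i⟫_ℂ‖ := by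
        rw [Finset.sum_comm]; simp only [Finset.mul_sum]
    _ ≤ ∑ i, ‖c i‖ * (‖x i‖ * ‖y i‖) := by
        gcongr with i
        rw [← EuclideanSpace.norm_toLp_star (y i)]
        exact sum_norm_inner_mul_norm_inner_le hz hw' _ _

end TraceNorm

def blockVec {m n : Type*} (l : ℕ) (a : ℂ) (X : Matrix m n ℂ) :
    EuclideanSpace ℂ (Fin l ⊕ n × m) :=
  WithLp.toLp 2 (Sum.elim (fun _ => a) (_root_.vec X))

lemma norm_sq_blockVec {m n : Type*} [Fintype m] [Fintype n] (l : ℕ) (a : ℂ)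
    (X : Matrix m n ℂ) :
    ‖blockVec l a X‖ ^ 2 = l * ‖a‖ ^ 2 + ‖WithLp.toLp 2 (_root_.vec X)‖ ^ 2 := by
  simp [blockVec, EuclideanSpace.norm_sq_eq, Fintype.sum_sum_type]

lemma norm_toLp_vec_vecMulVec {m n : Type*} [Fintype m] [Fintype n] (x : m → ℂ) (y : n → ℂ) :
    ‖WithLp.toLp 2 (_root_.vec (vecMulVec x y))‖ = ‖WithLp.toLp 2 x‖ * ‖WithLp.toLp 2 y‖ := by
  simp only [EuclideanSpace.norm_eq, _root_.vec, vecMulVec_apply, norm_mul, mul_pow,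
    Fintype.sum_prod_type, ← Finset.mul_sum, ← Finset.sum_mul]
  rw [← Real.sqrt_mul (Finset.sum_nonneg fun _ _ => by positivity), mul_comm]

/- `realign (X ⊗ Y) = vec X (vec Y)ᵀ`, `tr_A (X ⊗ Y) = (tr X) Y` and `tr_B (X ⊗ Y) = (tr Y) X`;
the unit trace of `ρ` produces the constant block `αβ`. -/
lemma Mblock_sum_kronecker {A B κ : Type*} [Fintype A] [Fintype B] [Fintype κ] (α β : ℝ)
    (l : ℕ) (c : κ → ℂ) (X : κ → Matrix A A ℂ) (Y : κ → Matrix B B ℂ)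
    (htr : ∑ k, c k * (X k).trace * (Y k).trace = 1) :
    Mblock α β l (∑ k, c k • (X k ⊗ₖ Y k)) =
      ∑ k, c k • vecMulVec (blockVec l (α * (X k).trace) (X k))
        (blockVec l (β * (Y k).trace) (Y k)) := by
  ext (r | r) (s | s)
  · simp only [Mblock, blockVec, fromBlocks_apply₁₁, of_apply, Matrix.sum_apply,
      Matrix.smul_apply, vecMulVec_apply, Sum.elim_inl, smul_eq_mul]
    rw [← mul_one ((α * β : ℝ) : ℂ), ← htr, Finset.mul_sum]
    push_cast
    exact Finset.sum_congr rfl fun k _ => by ring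
  all_goals
    simp only [Mblock, blockVec, fromBlocks_apply₁₂, fromBlocks_apply₂₁, fromBlocks_apply₂₂,
      ptrA, ptrB, realign, _root_.vec, of_apply, Matrix.sum_apply, Matrix.smul_apply,
      vecMulVec_apply, kroneckerMap_apply, Sum.elim_inl, Sum.elim_inr,
      smul_eq_mul, trace, diag_apply, Finset.mul_sum, Finset.sum_mul]
  all_goals
    rw [Finset.sum_comm]
    exact Finset.sum_congr rfl fun k _ => Finset.sum_congr rfl fun a _ => by ring

lemma vecMulVec_star_sum_kronecker {A B κ : Type*} [Fintype κ] (a : κ → ℂ) (u : κ → A → ℂ)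
    (v : κ → B → ℂ) :
    vecMulVec (fun x => ∑ k, a k * u k x.1 * v k x.2)
        (star fun x => ∑ k, a k * u k x.1 * v k x.2) =
      ∑ p : κ × κ, (a p.1 * star (a p.2)) •
        (vecMulVec (u p.1) (star (u p.2)) ⊗ₖ vecMulVec (v p.1) (star (v p.2))) := by
  ext x y
  simp only [vecMulVec_apply, Pi.star_apply, star_sum, star_mul', Finset.sum_mul_sum,
    Matrix.sum_apply, Matrix.smul_apply, kroneckerMap_apply, smul_eq_mul, Fintype.sum_prod_type]
  exact Finset.sum_congr rfl fun m _ => Finset.sum_congr rfl fun n _ => by ring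

section Orthonormal

variable {A κ : Type*} [Fintype A] [DecidableEq κ]

lemma orthonormal_toLp_iff (u : κ → A → ℂ) :
    Orthonormal ℂ (fun k => WithLp.toLp 2 (u k)) ↔
      ∀ k k', ∑ i, conj (u k i) * u k' i = if k = k' then 1 else 0 := by
  simp only [orthonormal_iff_ite, EuclideanSpace.inner_toLp_toLp, dotProduct, Pi.star_apply,
    RCLike.star_def, mul_comm]

lemma trace_vecMulVec_star_of_orthonormal {u : κ → A → ℂ}
    (hu : Orthonormal ℂ (fun k => WithLp.toLp 2 (u k))) (m n : κ) :
    (vecMulVec (u m) (star (u n))).trace = if m = n then 1 else 0 := by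
  rw [trace_vecMulVec, ← EuclideanSpace.inner_toLp_toLp, orthonormal_iff_ite.mp hu]
  exact if_congr eq_comm rfl rfl

lemma norm_blockVec_of_orthonormal {u : κ → A → ℂ}
    (hu : Orthonormal ℂ (fun k => WithLp.toLp 2 (u k))) (l : ℕ) (r : ℝ) (m n : κ) :
    ‖blockVec l (r * (vecMulVec (u m) (star (u n))).trace) (vecMulVec (u m) (star (u n)))‖ =
      if m = n then √(l * r ^ 2 + 1) else 1 := by
  rw [← Real.sqrt_sq (norm_nonneg _), norm_sq_blockVec, norm_toLp_vec_vecMulVec,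
    EuclideanSpace.norm_toLp_star (WithLp.toLp 2 (u n)), hu.1 m, hu.1 n,
    trace_vecMulVec_star_of_orthonormal hu]
  split_ifs <;> simp

end Orthonormal

lemma sum_sqrt_mul_sqrt_mul_ite_le {κ : Type*} [Fintype κ] [DecidableEq κ] {μ : κ → ℝ}
    (hμ : ∀ k, 0 ≤ μ k) (hsum : ∑ k, μ k = 1) (S : ℝ) :
    ∑ p : κ × κ, √(μ p.1) * √(μ p.2) * (if p.1 = p.2 then S else 1) ≤
      S + (Fintype.card κ - 1) := by
  have hsplit : ∀ m n, √(μ m) * √(μ n) * (if m = n then S else 1) =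
      √(μ m) * √(μ n) + if m = n then μ m * (S - 1) else 0 := by
    intro m n
    split_ifs with h
    · subst h; rw [Real.mul_self_sqrt (hμ _)]; ring
    · ring
  have hcs : (∑ k, √(μ k)) ^ 2 ≤ Fintype.card κ := by
    simpa [Real.sq_sqrt (hμ _), hsum] using
      sq_sum_le_card_mul_sum_sq (s := Finset.univ) (f := fun k => √(μ k))
  simp only [Fintype.sum_prod_type, hsplit, Finset.sum_add_distrib, ← Finset.mul_sum,
    Finset.sum_ite_eq, Finset.mem_univ, if_true, ← Finset.sum_mul, hsum]
  linarith [hcs]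

theorem traceNorm_Mblock_pure_le'_general {dA dB d : ℕ}
    (μ : Fin d → ℝ) (hμ : ∀ i, 0 ≤ μ i) (hsum : ∑ i, μ i = 1)
    (u : Fin d → Fin dA → ℂ) (v : Fin d → Fin dB → ℂ)
    (hu : ∀ k k', ∑ i, starRingEnd ℂ (u k i) * u k' i = if k = k' then 1 else 0)
    (hv : ∀ k k', ∑ i, starRingEnd ℂ (v k i) * v k' i = if k = k' then 1 else 0)
    (φ : Fin dA × Fin dB → ℂ)
    (hφ : φ = fun x => ∑ k, (Real.sqrt (μ k) : ℂ) * u k x.1 * v k x.2)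
    (α β : ℝ) (l : ℕ) :
    traceNorm (Mblock α β l (Matrix.vecMulVec φ (star φ))) ≤
      Real.sqrt ((l * α ^ 2 + 1) * (l * β ^ 2 + 1)) + ((d : ℝ) - 1) := by
  have hu' := (orthonormal_toLp_iff u).mpr hu
  have hv' := (orthonormal_toLp_iff v).mpr hv
  have htr : ∑ p : Fin d × Fin d, (√(μ p.1) : ℂ) * star (√(μ p.2) : ℂ) *
      (vecMulVec (u p.1) (star (u p.2))).trace * (vecMulVec (v p.1) (star (v p.2))).trace = 1 := by
    simp only [trace_vecMulVec_star_of_orthonormal hu', trace_vecMulVec_star_of_orthonormal hv',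
      Fintype.sum_prod_type, mul_ite, mul_one, mul_zero, Finset.sum_ite_eq, Finset.mem_univ,
      if_true, Complex.star_def, Complex.conj_ofReal, ← Complex.ofReal_mul,
      Real.mul_self_sqrt (hμ _), ← Complex.ofReal_sum, hsum, Complex.ofReal_one]
  rw [hφ, vecMulVec_star_sum_kronecker, Mblock_sum_kronecker α β l _ _ _ htr]
  refine (traceNorm_sum_smul_vecMulVec_le _ _ _).trans ?_
  simp only [norm_blockVec_of_orthonormal hu', norm_blockVec_of_orthonormal hv']
  calc _ = ∑ p : Fin d × Fin d, √(μ p.1) * √(μ p.2) *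
        (if p.1 = p.2 then √((l * α ^ 2 + 1) * (l * β ^ 2 + 1)) else 1) := by
        refine Finset.sum_congr rfl fun p _ => ?_
        rw [norm_mul, norm_star, Complex.norm_of_nonneg (Real.sqrt_nonneg _),
          Complex.norm_of_nonneg (Real.sqrt_nonneg _), Real.sqrt_mul (by positivity)]
        split_ifs <;> ring
    _ ≤ _ := by simpa using sum_sqrt_mul_sqrt_mul_ite_le hμ hsum _

/-- Lemma 2(2): for a pure state in Schmidt form `|φ⟩ = ∑ᵢ √μᵢ |i_A i_B⟩`,
`‖M_{α,β}^l(|φ⟩⟨φ|)‖_tr ≤ √((lα²+1)(lβ²+1)) + (d − 1)`. -/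
theorem traceNorm_Mblock_pure_le' {dA dB d : ℕ} (hd : d = min dA dB)
    (μ : Fin d → ℝ) (hμ : ∀ i, 0 ≤ μ i) (hsum : ∑ i, μ i = 1)
    (u : Fin d → Fin dA → ℂ) (v : Fin d → Fin dB → ℂ)
    (hu : ∀ k k', ∑ i, starRingEnd ℂ (u k i) * u k' i = if k = k' then 1 else 0)
    (hv : ∀ k k', ∑ i, starRingEnd ℂ (v k i) * v k' i = if k = k' then 1 else 0)
    (φ : Fin dA × Fin dB → ℂ)
    (hφ : φ = fun x => ∑ k, (Real.sqrt (μ k) : ℂ) * u k x.1 * v k x.2)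
    (α β : ℝ) (l : ℕ) :
    traceNorm (Mblock α β l (Matrix.vecMulVec φ (star φ))) ≤
      Real.sqrt ((l * α ^ 2 + 1) * (l * β ^ 2 + 1)) + ((d : ℝ) - 1) :=
  traceNorm_Mblock_pure_le'_general μ hμ hsum u v hu hv φ hφ α β l
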